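/- There exists a constant $C > 0$ such that for all $\beta \in (0, 1/2]$ and all $t \in (0, 1/4]$, one has $\Big|\beta^2 t^{\beta-2}(1-t^{\beta})^{-3}\big[(\beta-1)+(\beta+1)t^{\beta}\big]\Big| \le C\, t^{\beta - 2}$. -/

import Mathlib

/-!
Write `u = t ^ β`. Bernoulli's inequality gives `u ≤ (1/2) ^ (2β) ≤ 1 - β`, i.e. `β ≤ 1 - u`, and
`|(β - 1) + (β + 1) u| ≤ (1 - u) + 2β`. With `r = β / (1 - u) ≤ 1` the prefactor is therefore at
most `r ^ 2 + 2 r ^ 3 ≤ 3`.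
-/

namespace Real

theorem rpow_le_one_sub_of_le_quarter {t β : ℝ} (ht0 : 0 ≤ t) (ht : t ≤ 1 / 4)
    (hβ0 : 0 ≤ β) (hβ : β ≤ 1 / 2) : t ^ β ≤ 1 - β :=
  calc t ^ β ≤ (1 / 4 : ℝ) ^ β := rpow_le_rpow ht0 ht hβ0
    _ = (1 + (-1 / 2) : ℝ) ^ (2 * β) := by
      rw [rpow_mul (by norm_num)]
      norm_num
    _ ≤ 1 + 2 * β * (-1 / 2) :=
      rpow_one_add_le_one_add_mul_self (by norm_num) (by linarith) (by linarith)
    _ = 1 - β := by ring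

end Real

theorem abs_sq_mul_inv_cube_mul_le_three {β u : ℝ} (hβ : 0 < β) (hu : 0 ≤ u) (hβu : β ≤ 1 - u) :
    |β ^ 2 * ((1 - u) ^ 3)⁻¹ * ((β - 1) + (β + 1) * u)| ≤ 3 := by
  have hs : 0 < 1 - u := hβ.trans_le hβu
  set r := β / (1 - u) with hr
  have hr0 : 0 ≤ r := by positivity
  have hr1 : r ≤ 1 := (div_le_one hs).2 hβu
  have hbracket : |(β - 1) + (β + 1) * u| ≤ (1 - u) + 2 * β := by
    rw [abs_le]
    constructor <;> nlinarith
  calc |β ^ 2 * ((1 - u) ^ 3)⁻¹ * ((β - 1) + (β + 1) * u)|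
      = β ^ 2 * ((1 - u) ^ 3)⁻¹ * |(β - 1) + (β + 1) * u| := by
        rw [abs_mul, abs_of_pos (by positivity)]
    _ ≤ β ^ 2 * ((1 - u) ^ 3)⁻¹ * ((1 - u) + 2 * β) := by gcongr
    _ = r ^ 2 + 2 * r ^ 3 := by
        rw [hr]
        field_simp
    _ ≤ 3 := by nlinarith [pow_le_one₀ hr0 hr1 (n := 2), pow_le_one₀ hr0 hr1 (n := 3)]

theorem stmt_8 :
    ∃ C > (0:ℝ), ∀ β ∈ Set.Ioc (0:ℝ) (1/2), ∀ t ∈ Set.Ioc (0:ℝ) (1/4),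
      |β ^ 2 * t ^ (β - 2) * ((1 - t ^ β) ^ 3)⁻¹ * ((β - 1) + (β + 1) * t ^ β)|
        ≤ C * t ^ (β - 2) := by
  refine ⟨3, by norm_num, ?_⟩
  rintro β ⟨hβ0, hβ⟩ t ⟨ht0, ht⟩
  have hβu : β ≤ 1 - t ^ β := by
    linarith [Real.rpow_le_one_sub_of_le_quarter ht0.le ht hβ0.le hβ]
  have hprefactor := abs_sq_mul_inv_cube_mul_le_three hβ0 (by positivity) hβu
  have htpow : 0 < t ^ (β - 2) := by positivity
  calc |β ^ 2 * t ^ (β - 2) * ((1 - t ^ β) ^ 3)⁻¹ * ((β - 1) + (β + 1) * t ^ β)|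
      = |β ^ 2 * ((1 - t ^ β) ^ 3)⁻¹ * ((β - 1) + (β + 1) * t ^ β) * t ^ (β - 2)| := by
        congr 1
        ring
    _ = |β ^ 2 * ((1 - t ^ β) ^ 3)⁻¹ * ((β - 1) + (β + 1) * t ^ β)| * t ^ (β - 2) := by
        rw [abs_mul, abs_of_pos htpow]
    _ ≤ 3 * t ^ (β - 2) := by gcongr
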